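/- Every minimal strongly connected digraph of order n ≥ 2 has at most 2(n−1) arcs. -/

import Mathlib

/-!
Fix a root `r`. Growing a tree one arc at a time yields an out-branching from `r` with at most
`n - 1` arcs, and dually an in-branching to `r`. Their union is already strongly connected
(route every `u → v` through `r`), so by minimality it contains every arc of the digraph.
-/

/-- Reachability in a digraph given by its arc set `A`. -/
def Reach {α : Type*} (A : Finset (α × α)) (u v : α) : Prop :=
  Relation.ReflTransGen (fun a b => (a, b) ∈ A) u v

/-- A digraph with vertex set `V` and arc set `A` is strongly connected if
every vertex reaches every other vertex by a directed path. -/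
def StrongConn {α : Type*} (V : Finset α) (A : Finset (α × α)) : Prop :=
  ∀ u ∈ V, ∀ v ∈ V, Reach A u v

/-- Minimal strongly connected: strongly connected and removing any arc
destroys strong connectivity. -/
def MSC {α : Type*} [DecidableEq α] (V : Finset α) (A : Finset (α × α)) : Prop :=
  StrongConn V A ∧ ∀ a ∈ A, ¬ StrongConn V (A.erase a)

/-- `l` is a directed (simple) path from `u` to `v` in the digraph with arc set `A`. -/
def IsPath {α : Type*} (A : Finset (α × α)) (u v : α) (l : List α) : Prop :=
  l.Chain' (fun a b => (a, b) ∈ A) ∧ l.head? = some u ∧ l.getLast? = some v ∧ l.Nodup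

/-- `(u,v)` is a transitive arc: it is an arc and there is a directed path from
`u` to `v` distinct from the single arc `(u,v)`. -/
def TransArc {α : Type*} (A : Finset (α × α)) (u v : α) : Prop :=
  (u, v) ∈ A ∧ ∃ l, IsPath A u v l ∧ l ≠ [u, v]

/-- `l` (a list of distinct vertices, of length ≥ 2) is a directed cycle:
consecutive vertices are joined by arcs, and there is an arc from the last
vertex back to the first. -/
def IsCycle {α : Type*} (A : Finset (α × α)) (l : List α) : Prop :=
  ∃ h : l ≠ [], l.Nodup ∧ 2 ≤ l.length ∧
    List.Chain (fun a b => (a, b) ∈ A) (l.getLast h) l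

/-- Well-formedness: nonempty vertex set, arcs join vertices of `V`, no loops. -/
def GoodDigraph {α : Type*} (V : Finset α) (A : Finset (α × α)) : Prop :=
  V.Nonempty ∧ ∀ a ∈ A, a.1 ∈ V ∧ a.2 ∈ V ∧ a.1 ≠ a.2

/-- Outdegree of a vertex. -/
def outdeg {α : Type*} [DecidableEq α] (A : Finset (α × α)) (v : α) : ℕ :=
  (A.filter (fun a => a.1 = v)).card

/-- Indegree of a vertex. -/
def indeg {α : Type*} [DecidableEq α] (A : Finset (α × α)) (v : α) : ℕ :=
  (A.filter (fun a => a.2 = v)).card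

/-- A linear vertex has indegree and outdegree equal to 1. -/
def LinearVertex {α : Type*} [DecidableEq α] (A : Finset (α × α)) (v : α) : Prop :=
  indeg A v = 1 ∧ outdeg A v = 1

/-- The digraph is a directed `n`-cycle: its vertices can be listed
`v₁, …, vₙ` so that the arcs are exactly `(v₁,v₂), …, (vₙ,v₁)`. -/
def IsCycleDigraph {α : Type*} [DecidableEq α] (V : Finset α) (A : Finset (α × α)) : Prop :=
  ∃ l : List α, l.Nodup ∧ 2 ≤ l.length ∧ l.toFinset = V ∧ A = (l.zip (l.rotate 1)).toFinset

/-- A directed tree: every arc is accompanied by its reverse, and the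
underlying undirected graph (on the vertex set `V`) is a tree. -/
def IsDirTree {α : Type*} [DecidableEq α] (V : Finset α) (A : Finset (α × α)) : Prop :=
  (∀ u v : α, (u, v) ∈ A → (v, u) ∈ A) ∧
  (SimpleGraph.fromRel (fun a b : {x // x ∈ V} => ((a : α), (b : α)) ∈ A)).IsTree

/-- `(V', A')` is the (internal or external) expansion of `(V, A)` by the new
vertex `v`.  Internal: an arc `(u,w)` is replaced by `(u,v)` and `(v,w)`.
External: the arcs `(u,v)` and `(v,w)` are added for vertices `u, w ∈ V`. -/
def IsExpansionBy {α : Type*} [DecidableEq α] (v : α) (V : Finset α) (A : Finset (α × α))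
    (V' : Finset α) (A' : Finset (α × α)) : Prop :=
  v ∉ V ∧ V' = insert v V ∧
    ((∃ u w, (u, w) ∈ A ∧ A' = insert (u, v) (insert (v, w) (A.erase (u, w)))) ∨
     (∃ u ∈ V, ∃ w ∈ V, A' = insert (u, v) (insert (v, w) A)))

open Finset

section Branching

variable {α : Type*} {V : Finset α} {A : Finset (α × α)} {r : α}

lemma Reach.mono {B : Finset (α × α)} (hAB : A ⊆ B) {u v : α} (h : Reach A u v) :
    Reach B u v :=
  Relation.ReflTransGen.mono (fun _ _ hab => hAB hab) _ _ h

lemma exists_arc_leaving_of_reach {S : Finset α} {x y : α} (h : Reach A x y) (hx : x ∈ S)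
    (hy : y ∉ S) : ∃ u ∈ S, ∃ v ∉ S, (u, v) ∈ A := by
  induction h with
  | refl => exact absurd hx hy
  | @tail b c _ hbc ih =>
    by_cases hb : b ∈ S
    · exact ⟨b, hb, c, hy, hbc⟩
    · exact ih hb

lemma StrongConn.of_reach_root (hin : ∀ v ∈ V, Reach A v r) (hout : ∀ v ∈ V, Reach A r v) :
    StrongConn V A :=
  fun u hu v hv => (hin u hu).trans (hout v hv)

variable [DecidableEq α]

lemma reach_image_swap {u v : α} : Reach (A.image Prod.swap) u v ↔ Reach A v u := by
  have hrel :
      (fun a b => (a, b) ∈ A.image Prod.swap) = Function.swap (fun a b => (a, b) ∈ A) := by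
    funext a b
    simp [Function.swap]
  rw [Reach, hrel, Relation.reflTransGen_swap, Reach]

lemma exists_partial_outBranching (hr : r ∈ V) (hA : ∀ a ∈ A, a.2 ∈ V)
    (hreach : ∀ v ∈ V, Reach A r v) (k : ℕ) (hk : k < #V) :
    ∃ S ⊆ V, ∃ B ⊆ A, r ∈ S ∧ #S = k + 1 ∧ #B ≤ k ∧ ∀ v ∈ S, Reach B r v := by
  induction k with
  | zero =>
    refine ⟨{r}, singleton_subset_iff.2 hr, ∅, empty_subset _, mem_singleton_self r, rfl,
      le_rfl, ?_⟩
    rintro v hv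
    rw [mem_singleton.1 hv]
    exact Relation.ReflTransGen.refl
  | succ k ih =>
    obtain ⟨S, hSV, B, hBA, hrS, hS, hB, hSreach⟩ := ih (by omega)
    obtain ⟨w, hwV, hwS⟩ := exists_mem_notMem_of_card_lt_card (s := S) (t := V) (by omega)
    obtain ⟨u, huS, v, hvS, huv⟩ := exists_arc_leaving_of_reach (hreach w hwV) hrS hwS
    refine ⟨insert v S, insert_subset (hA _ huv) hSV, insert (u, v) B, insert_subset huv hBA,
      mem_insert_of_mem hrS, by rw [card_insert_of_notMem hvS, hS],
      (card_insert_le _ _).trans (by omega), ?_⟩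
    intro x hx
    rcases mem_insert.1 hx with rfl | hxS
    · exact Relation.ReflTransGen.tail ((hSreach u huS).mono (subset_insert _ _))
        (mem_insert_self _ _)
    · exact (hSreach x hxS).mono (subset_insert _ _)

lemma exists_outBranching (hr : r ∈ V) (hA : ∀ a ∈ A, a.2 ∈ V)
    (hreach : ∀ v ∈ V, Reach A r v) :
    ∃ B ⊆ A, #B + 1 ≤ #V ∧ ∀ v ∈ V, Reach B r v := by
  have hV : 0 < #V := card_pos.2 ⟨r, hr⟩
  obtain ⟨S, hSV, B, hBA, -, hS, hB, hSreach⟩ :=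
    exists_partial_outBranching hr hA hreach (#V - 1) (by omega)
  obtain rfl : S = V := eq_of_subset_of_card_le hSV (by omega)
  exact ⟨B, hBA, by omega, hSreach⟩

lemma exists_inBranching (hr : r ∈ V) (hA : ∀ a ∈ A, a.1 ∈ V)
    (hreach : ∀ v ∈ V, Reach A v r) :
    ∃ B ⊆ A, #B + 1 ≤ #V ∧ ∀ v ∈ V, Reach B v r := by
  obtain ⟨B, hBA, hB, hBreach⟩ := exists_outBranching (A := A.image Prod.swap) hr
    (fun a ha => by obtain ⟨b, hb, rfl⟩ := mem_image.1 ha; exact hA b hb)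
    fun v hv => reach_image_swap.2 (hreach v hv)
  refine ⟨B.image Prod.swap, ?_, by have := card_image_le (s := B) (f := Prod.swap); omega, ?_⟩
  · intro a ha
    obtain ⟨b, hb, rfl⟩ := mem_image.1 ha
    obtain ⟨c, hc, rfl⟩ := mem_image.1 (hBA hb)
    simpa using hc
  · exact fun v hv => reach_image_swap.2 (hBreach v hv)

lemma MSC.eq_of_subset_of_strongConn {B : Finset (α × α)} (h : MSC V A) (hBA : B ⊆ A)
    (hB : StrongConn V B) : B = A := by
  refine hBA.antisymm fun a ha => ?_
  by_contra haB
  exact h.2 a ha fun u hu v hv => (hB u hu v hv).mono (subset_erase.2 ⟨hBA, haB⟩)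

end Branching

theorem stmt_4_general {α : Type*} [DecidableEq α] (V : Finset α) (A : Finset (α × α))
    (hg : GoodDigraph V A) (h : MSC V A) :
    A.card ≤ 2 * (V.card - 1) := by
  obtain ⟨⟨r, hr⟩, hV⟩ := hg
  obtain ⟨Bout, hBoutA, hBout, hBoutReach⟩ :=
    exists_outBranching hr (fun a ha => (hV a ha).2.1) fun v hv => h.1 r hr v hv
  obtain ⟨Bin, hBinA, hBin, hBinReach⟩ :=
    exists_inBranching hr (fun a ha => (hV a ha).1) fun v hv => h.1 v hv r hr
  have hunion : Bout ∪ Bin = A := h.eq_of_subset_of_strongConn (union_subset hBoutA hBinA)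
    (.of_reach_root (fun v hv => (hBinReach v hv).mono subset_union_right)
      fun v hv => (hBoutReach v hv).mono subset_union_left)
  calc #A = #(Bout ∪ Bin) := by rw [hunion]
    _ ≤ #Bout + #Bin := card_union_le _ _
    _ ≤ 2 * (#V - 1) := by omega

/-- an MSC digraph of order `n ≥ 2` has at most `2(n-1)` arcs. -/
theorem stmt_4 {α : Type*} [DecidableEq α] (V : Finset α) (A : Finset (α × α))
    (hg : GoodDigraph V A) (hn : 2 ≤ V.card) (h : MSC V A) :
    A.card ≤ 2 * (V.card - 1) :=
  stmt_4_general V A hg h
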